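/- arXiv:1303.4579 — 4 statements merged into one kernel-verified Lean document; each statement's English description precedes it below -/
import Mathlib

section
/- The minimum 3-covering energy of the path P₃ depends on the choice of minimum 3-covering set: with Q = {v₂} the energy is 3, while with Q = {v₁} the energy is not equal to 3 (it equals the sum of absolute values of the roots of λ³ - λ² - 2λ + 1, which is strictly greater than 3). -/
/-!
For `Q = {v₂}` the characteristic polynomial is `λ³ - λ² - 2λ = λ(λ - 2)(λ + 1)`, so the energy
is `0 + 2 + 1 = 3`. For `Q = {v₁}` it is `p = λ³ - λ² - 2λ + 1`, which changes sign on
`(-2, -1)`, `(0, 1)` and `(1, 2)`; hence its roots are `r₁ < -1 < 0 < r₂, r₃`. They sum to the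
trace `1`, so the energy is `-r₁ + r₂ + r₃ = 1 - 2r₁ > 3`.
-/

open Polynomial Matrix

/-- The minimum 3-covering energy of a real matrix: the sum of the absolute
values of the roots of its characteristic polynomial (with multiplicity). -/
noncomputable def energy {n : ℕ} (A : Matrix (Fin n) (Fin n) ℝ) : ℝ :=
  (A.charpoly.roots.map (fun x => |x|)).sum

theorem Polynomial.roots_eq_of_nodup_of_card_eq {R : Type*} [CommRing R] [IsDomain R]
    {p : R[X]} (hp : p ≠ 0) {s : Multiset R} (hs : s.Nodup) (hroot : ∀ x ∈ s, p.IsRoot x)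
    (hcard : Multiset.card s = p.natDegree) : p.roots = s := by
  have hle : s ≤ p.roots := (Multiset.le_iff_subset hs).2 fun x hx => (mem_roots hp).2 (hroot x hx)
  exact (Multiset.eq_of_le_of_card_le hle (hcard ▸ card_roots' p)).symm

theorem Polynomial.exists_isRoot_mem_Ioo (p : ℝ[X]) {a b : ℝ} (hab : a ≤ b)
    (hsign : p.eval a * p.eval b < 0) : ∃ r ∈ Set.Ioo a b, p.IsRoot r := by
  have hcont : ContinuousOn (fun x => p.eval x) (Set.Icc a b) := p.continuousOn
  rcases lt_or_gt_of_ne (left_ne_zero_of_mul hsign.ne) with ha | ha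
  · exact intermediate_value_Ioo hab hcont ⟨ha, by nlinarith⟩
  · exact intermediate_value_Ioo' hab hcont ⟨by nlinarith, ha⟩

theorem charpoly_path3_loop_center :
    (!![0, 1, 0; 1, 1, 1; 0, 1, 0] : Matrix (Fin 3) (Fin 3) ℝ).charpoly = X ^ 3 - X ^ 2 - 2 * X := by
  rw [Matrix.charpoly, Matrix.det_fin_three]
  simp only [charmatrix_apply_eq, charmatrix_apply_ne, ne_eq, Fin.reduceEq, not_false_eq_true,
    of_apply, cons_val', cons_val_zero, cons_val_one, cons_val, cons_val_fin_one, map_zero, map_one]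
  ring

theorem charpoly_path3_loop_leaf :
    (!![1, 1, 0; 1, 0, 1; 0, 1, 0] : Matrix (Fin 3) (Fin 3) ℝ).charpoly
      = X ^ 3 - X ^ 2 - 2 * X + 1 := by
  rw [Matrix.charpoly, Matrix.det_fin_three]
  simp only [charmatrix_apply_eq, charmatrix_apply_ne, ne_eq, Fin.reduceEq, not_false_eq_true,
    of_apply, cons_val', cons_val_zero, cons_val_one, cons_val, cons_val_fin_one, map_zero, map_one]
  ring

theorem roots_cubic_center : (X ^ 3 - X ^ 2 - 2 * X : ℝ[X]).roots = {0, 2, -1} := by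
  have hdeg : (X ^ 3 - X ^ 2 - 2 * X : ℝ[X]).natDegree = 3 := by compute_degree!
  exact roots_eq_of_nodup_of_card_eq (ne_zero_of_natDegree_gt (n := 0) (by omega))
    (by norm_num) (by norm_num) (by simp [hdeg])

theorem roots_cubic_leaf :
    ∃ r₁ r₂ r₃ : ℝ, r₁ < -1 ∧ 0 < r₂ ∧ 0 < r₃ ∧
      (X ^ 3 - X ^ 2 - 2 * X + 1 : ℝ[X]).roots = {r₁, r₂, r₃} := by
  have hdeg : (X ^ 3 - X ^ 2 - 2 * X + 1 : ℝ[X]).natDegree = 3 := by compute_degree!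
  set p : ℝ[X] := X ^ 3 - X ^ 2 - 2 * X + 1
  obtain ⟨r₁, ⟨-, hr₁⟩, h₁⟩ := p.exists_isRoot_mem_Ioo (a := -2) (b := -1) (by norm_num)
    (by norm_num [p])
  obtain ⟨r₂, ⟨hr₂, hr₂'⟩, h₂⟩ := p.exists_isRoot_mem_Ioo (a := 0) (b := 1) (by norm_num)
    (by norm_num [p])
  obtain ⟨r₃, ⟨hr₃, -⟩, h₃⟩ := p.exists_isRoot_mem_Ioo (a := 1) (b := 2) (by norm_num)
    (by norm_num [p])
  refine ⟨r₁, r₂, r₃, hr₁, hr₂, by linarith, roots_eq_of_nodup_of_card_eq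
    (ne_zero_of_natDegree_gt (n := 0) (by omega)) ?_ ?_ (by simp [hdeg])⟩
  · simp only [Multiset.insert_eq_cons, Multiset.nodup_cons, Multiset.mem_cons,
      Multiset.mem_singleton, Multiset.nodup_singleton, and_true]
    exact ⟨by rintro (h | h) <;> linarith, by intro h; linarith⟩
  · simp only [Multiset.insert_eq_cons, Multiset.mem_cons, Multiset.mem_singleton]
    rintro x (rfl | rfl | rfl) <;> assumption

theorem three_lt_energy_path3_loop_leaf :
    3 < energy (!![1, 1, 0; 1, 0, 1; 0, 1, 0] : Matrix (Fin 3) (Fin 3) ℝ) := by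
  set A : Matrix (Fin 3) (Fin 3) ℝ := !![1, 1, 0; 1, 0, 1; 0, 1, 0]
  obtain ⟨r₁, r₂, r₃, hr₁, hr₂, hr₃, hroots⟩ := roots_cubic_leaf
  rw [← charpoly_path3_loop_leaf] at hroots
  have hsplits : A.charpoly.Splits := by
    rw [splits_iff_card_roots, hroots, charpoly_path3_loop_leaf, eq_comm]
    compute_degree!
  have hsum : r₁ + r₂ + r₃ = 1 := by
    have htrace : A.trace = 1 := by simp [A, trace_fin_three]
    rw [trace_eq_sum_roots_charpoly_of_splits hsplits, hroots] at htrace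
    simpa [add_assoc] using htrace
  rw [energy, hroots]
  simp only [Multiset.insert_eq_cons, Multiset.map_cons, Multiset.map_singleton,
    Multiset.sum_cons, Multiset.sum_singleton, abs_of_neg (by linarith : r₁ < 0), abs_of_pos hr₂,
    abs_of_pos hr₃]
  linarith

theorem stmt_2 :
    energy (!![0, 1, 0; 1, 1, 1; 0, 1, 0] : Matrix (Fin 3) (Fin 3) ℝ) = 3 ∧
    energy (!![1, 1, 0; 1, 0, 1; 0, 1, 0] : Matrix (Fin 3) (Fin 3) ℝ)
      = (((X ^ 3 - X ^ 2 - 2 * X + 1 : ℝ[X]).roots).map (fun x => |x|)).sum ∧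
    3 < energy (!![1, 1, 0; 1, 0, 1; 0, 1, 0] : Matrix (Fin 3) (Fin 3) ℝ) := by
  refine ⟨?_, by rw [energy, charpoly_path3_loop_leaf], three_lt_energy_path3_loop_leaf⟩
  rw [energy, charpoly_path3_loop_center, roots_cubic_center]
  norm_num
end

section
/- For n ≥ 3, the characteristic polynomial of the n×n matrix A with A_ij = 1 for i ≠ j, A_ii = 1 for 1 ≤ i ≤ n-2, and A_ii = 0 for i ∈ {n-1, n}, is (λ+1)·λ^{n-3}·(λ² - (n-1)λ - (n-2)). -/
/-!
Write `A = J - E`, where `J` is the all-ones matrix and `E` is the diagonal indicator of the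
last two vertices. Then `x • 1 - A = D - 𝟙 𝟙ᵀ` with `D = diag(x, …, x, x + 1, x + 1)`, a rank-one
perturbation of a diagonal matrix, so the matrix determinant lemma gives
`det (x • 1 - A) = x ^ (n - 2) (x + 1) ^ 2 (1 - (n - 2) / x - 2 / (x + 1))` whenever
`x ∉ {0, -1}`. Two real polynomials agreeing at infinitely many points are equal.
-/

open Polynomial Matrix

/-- The minimum 3-covering matrix of the complete graph `K_n`, with 3-covering
set consisting of the first `n - 2` vertices: all off-diagonal entries are 1,
the first `n - 2` diagonal entries are 1, and the last two are 0. -/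
def covMatrix (n : ℕ) : Matrix (Fin n) (Fin n) ℝ :=
  Matrix.of fun i j => if i = j then (if (i : ℕ) < n - 2 then 1 else 0) else 1

namespace Matrix

variable {K m ι : Type*} [Field K] [Fintype m] [DecidableEq m] [Unique ι]

theorem det_diagonal_add_replicateCol_mul_replicateRow {d : m → K} (hd : ∀ i, d i ≠ 0)
    (u v : m → K) :
    (diagonal d + replicateCol ι u * replicateRow ι v).det
      = (∏ i, d i) * (1 + ∑ i, v i * u i / d i) := by
  have hfac : diagonal d + replicateCol ι u * replicateRow ι v
      = diagonal d * (1 + replicateCol ι (fun i => u i / d i) * replicateRow ι v) := by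
    rw [Matrix.mul_add, Matrix.mul_one, ← Matrix.mul_assoc]
    congr 2
    ext i j
    simp [diagonal_mul, mul_div_cancel₀ _ (hd i)]
  rw [hfac, det_mul, det_diagonal, det_one_add_replicateCol_mul_replicateRow, dotProduct]
  simp only [mul_div_assoc']

end Matrix

@[to_additive]
theorem Fin.prod_univ_ite_lt {M : Type*} [CommMonoid M] (m k : ℕ) (a b : M) :
    ∏ i : Fin (m + k), (if (i : ℕ) < m then a else b) = a ^ m * b ^ k := by
  simp [Fin.prod_univ_add]

theorem scalar_sub_covMatrix (m : ℕ) (x : ℝ) :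
    scalar (Fin (m + 2)) x - covMatrix (m + 2)
      = diagonal (fun i : Fin (m + 2) => if (i : ℕ) < m then x else x + 1)
        + replicateCol Unit (fun _ : Fin (m + 2) => (-1 : ℝ))
          * replicateRow Unit (fun _ : Fin (m + 2) => (1 : ℝ)) := by
  ext i j
  rcases eq_or_ne i j with rfl | hij
  · by_cases hi : (i : ℕ) < m <;> simp [covMatrix, hi, mul_apply, sub_eq_add_neg]
  · simp [covMatrix, hij, mul_apply]

theorem eval_charpoly_covMatrix (m : ℕ) {x : ℝ} (hx : x ≠ 0) (hx1 : x + 1 ≠ 0) :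
    (covMatrix (m + 2)).charpoly.eval x = x ^ m * (x + 1) ^ 2 * (1 - m / x - 2 / (x + 1)) := by
  have hd : ∀ i : Fin (m + 2), (if (i : ℕ) < m then x else x + 1) ≠ 0 := fun i => by
    split_ifs <;> assumption
  rw [eval_charpoly, scalar_sub_covMatrix, det_diagonal_add_replicateCol_mul_replicateRow hd,
    Fin.prod_univ_ite_lt]
  simp only [one_mul, mul_neg, neg_div, Finset.sum_neg_distrib, one_div,
    apply_ite Inv.inv, Fin.sum_univ_ite_lt]
  simp only [nsmul_eq_mul, div_eq_mul_inv]
  ring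

theorem stmt_6 (n : ℕ) (hn : 3 ≤ n) :
    (covMatrix n).charpoly
      = (X + 1) * X ^ (n - 3) * (X ^ 2 - C ((n : ℝ) - 1) * X - C ((n : ℝ) - 2)) := by
  obtain ⟨m, rfl⟩ : ∃ m, n = m + 1 + 2 := ⟨n - 3, by omega⟩
  refine eq_of_infinite_eval_eq _ _ ((Set.toFinite {0, -1}).infinite_compl.mono fun x hx => ?_)
  have hx0 : x ≠ 0 := fun h => hx (Or.inl h)
  have hx1 : x + 1 ≠ 0 := fun h => hx (Or.inr (eq_neg_of_add_eq_zero_left h))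
  rw [Set.mem_ofPred_eq, eval_charpoly_covMatrix _ hx0 hx1]
  simp only [eval_mul, eval_add, eval_sub, eval_pow, eval_X, eval_one, eval_C]
  push_cast
  field_simp
  ring
end

section
/- For n ≥ 3, the eigenvalues of the n×n matrix A (off-diagonal entries 1, first n-2 diagonal entries 1, last two diagonal entries 0) are: 0 with multiplicity n-3, -1 with multiplicity 1, and the two roots ((n-1) ± √(n²+2n-7))/2 of λ² - (n-1)λ - (n-2). -/
/-!
Write `x • 1 - A = D - J` with `J` the all-ones matrix and `D` diagonal with entries `x`
(`n - 2` times) and `x + 1` (twice). The matrix determinant lemma gives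
`det (D - J) = (∏ dᵢ) (1 - ∑ 1 / dᵢ) = x ^ (n - 3) (x + 1) (x² - (n - 1) x - (n - 2))`,
and the quadratic factor has discriminant `(n - 1)² + 4 (n - 2) = n² + 2n - 7`.
-/

open Polynomial Matrix

@[to_additive]
theorem Fin.prod_ite_val_lt {M : Type*} [CommMonoid M] {n k : ℕ} (hk : k ≤ n) (a b : M) :
    ∏ i : Fin n, (if (i : ℕ) < k then a else b) = a ^ k * b ^ (n - k) := by
  rw [Finset.prod_ite, Finset.prod_const, Finset.prod_const, Fin.card_filter_val_lt,
    Finset.filter_not, Finset.card_sdiff_of_subset (Finset.filter_subset _ _),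
    Fin.card_filter_val_lt, Finset.card_univ, Fintype.card_fin, min_eq_right hk]

theorem Matrix.det_diagonal_sub_ones {ι K : Type*} [Fintype ι] [DecidableEq ι] [Field K]
    (d : ι → K) (hd : ∀ i, d i ≠ 0) :
    (diagonal d - of fun _ _ => (1 : K)).det = (∏ i, d i) * (1 - ∑ i, (d i)⁻¹) := by
  have hunit : IsUnit (diagonal d).det := by
    rw [det_diagonal]; exact (Finset.prod_ne_zero_iff.mpr fun i _ => hd i).isUnit
  have hrank_one : diagonal d - (of fun _ _ => (1 : K)) =
      diagonal d +
        replicateCol Unit (fun _ : ι => (-1 : K)) * replicateRow Unit (fun _ : ι => (1 : K)) := by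
    ext i j; simp [Matrix.mul_apply, sub_eq_add_neg]
  have hinv : (diagonal d)⁻¹ = diagonal fun i => (d i)⁻¹ :=
    inv_eq_right_inv (by simp [diagonal_mul_diagonal, hd])
  rw [hrank_one, det_add_replicateCol_mul_replicateRow hunit, det_diagonal, hinv, det_unique]
  simp [Matrix.mul_apply, Matrix.diagonal_apply, sub_eq_add_neg]

theorem smul_one_sub_covMatrix (n : ℕ) (x : ℝ) :
    x • (1 : Matrix (Fin n) (Fin n) ℝ) - covMatrix n =
      diagonal (fun i : Fin n => if (i : ℕ) < n - 2 then x else x + 1) - of fun _ _ => 1 := by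
  ext i j
  by_cases h : i = j
  · subst h; simp [covMatrix]; split_ifs <;> ring
  · simp [covMatrix, h]

theorem det_smul_one_sub_covMatrix {n : ℕ} (hn : 3 ≤ n) {x : ℝ} (hx : 0 < x) :
    (x • (1 : Matrix (Fin n) (Fin n) ℝ) - covMatrix n).det =
      x ^ (n - 3) * (x + 1) * (x ^ 2 - (n - 1) * x - (n - 2)) := by
  have hk : n - 2 ≤ n := Nat.sub_le n 2
  rw [smul_one_sub_covMatrix, det_diagonal_sub_ones _ fun i => by split_ifs <;> positivity,
    Fin.prod_ite_val_lt hk]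
  simp only [apply_ite Inv.inv]
  rw [Fin.sum_ite_val_lt hk]
  obtain ⟨m, rfl⟩ : ∃ m, n = m + 3 := ⟨n - 3, by omega⟩
  simp only [show m + 3 - 2 = m + 1 by omega, show m + 3 - (m + 1) = 2 by omega,
    Nat.add_sub_cancel, nsmul_eq_mul]
  push_cast
  field_simp
  ring

theorem covMatrix_charpoly {n : ℕ} (hn : 3 ≤ n) :
    (covMatrix n).charpoly =
      X ^ (n - 3) * (X + 1) * (X ^ 2 - C ((n : ℝ) - 1) * X - C ((n : ℝ) - 2)) := by
  -- `D` is invertible only for `x ∉ {0, -1}`, so compare the two sides at every `x > 0`.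
  refine eq_of_infinite_eval_eq _ _ ((Set.Ioi_infinite 0).mono fun x (hx : 0 < x) => ?_)
  rw [Set.mem_ofPred_eq, eval_charpoly, scalar_apply, ← smul_one_eq_diagonal,
    det_smul_one_sub_covMatrix hn hx]
  simp

theorem X_sq_sub_C_mul_X_sub_C {K : Type*} [Field K] [NeZero (2 : K)] {b c s : K}
    (hs : s ^ 2 = b ^ 2 + 4 * c) :
    X ^ 2 - C b * X - C c = (X - C ((b + s) / 2)) * (X - C ((b - s) / 2)) := by
  have hsum : (b + s) / 2 + (b - s) / 2 = b := by field_simp; ring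
  have hprod : (b + s) / 2 * ((b - s) / 2) = -c := by field_simp; linear_combination -hs
  calc X ^ 2 - C b * X - C c
      = X ^ 2 - C ((b + s) / 2 + (b - s) / 2) * X + C ((b + s) / 2 * ((b - s) / 2)) := by
        rw [hsum, hprod, C_neg, sub_eq_add_neg]
    _ = (X - C ((b + s) / 2)) * (X - C ((b - s) / 2)) := by
        simp only [C_add, C_mul]; ring

theorem stmt_7 (n : ℕ) (hn : 3 ≤ n) :
    (covMatrix n).charpoly.roots
      = Multiset.replicate (n - 3) (0 : ℝ) +
        {-1, ((n : ℝ) - 1 + Real.sqrt ((n : ℝ) ^ 2 + 2 * n - 7)) / 2,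
             ((n : ℝ) - 1 - Real.sqrt ((n : ℝ) ^ 2 + 2 * n - 7)) / 2} := by
  have hn' : (3 : ℝ) ≤ n := by exact_mod_cast hn
  have hdisc : Real.sqrt ((n : ℝ) ^ 2 + 2 * n - 7) ^ 2 =
      ((n : ℝ) - 1) ^ 2 + 4 * ((n : ℝ) - 2) := by
    rw [Real.sq_sqrt (by nlinarith)]; ring
  rw [covMatrix_charpoly hn, X_sq_sub_C_mul_X_sub_C hdisc, ← roots_multiset_prod_X_sub_C (_ + _)]
  congr 1
  simp only [Multiset.insert_eq_cons, Multiset.add_cons, Multiset.map_cons, map_neg, map_one,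
    sub_neg_eq_add, Multiset.map_add, Multiset.map_replicate, map_zero, sub_zero,
    Multiset.map_singleton, Multiset.prod_cons, Multiset.prod_add, Multiset.prod_replicate,
    Multiset.prod_singleton]
  ring
end

section
/- For n ≥ 3, the sum of the absolute values of the eigenvalues of the n×n matrix A (off-diagonal entries 1, first n-2 diagonal entries 1, last two diagonal entries 0) equals 1 + √(n²+2n-7). -/
/-!
With `s` the covering set, `xI - A = diag(d) - J`, where `J` is the all-ones matrix, `dᵢ = x`
on `s` and `dᵢ = x + 1` off `s`. The matrix determinant lemma gives
`det (xI - A) = x^|s| (x+1)^|sᶜ| (1 - |s|/x - |sᶜ|/(x+1))`, so the characteristic polynomial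
is `X^(|s|-1) (X+1)^(|sᶜ|-1) (X² - (n-1) X - |s|)`. The roots of the quadratic factor have
product `-|s| ≤ 0`, so their absolute values add up to the square root of its discriminant
`(n-1)² + 4|s|`.
-/

open Polynomial Matrix

open Finset

theorem sum_abs_roots_X_sq_sub_C_mul_X_sub_C {b c : ℝ} (hc : 0 ≤ c) :
    ((X ^ 2 - C b * X - C c).roots.map abs).sum = √(b ^ 2 + 4 * c) := by
  set r := √(b ^ 2 + 4 * c)
  have hr : r ^ 2 = b ^ 2 + 4 * c := Real.sq_sqrt (by positivity)
  have hbr : |b| ≤ r := Real.abs_le_sqrt (by linarith)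
  have hfactor :
      (X ^ 2 - C b * X - C c : ℝ[X]) = (X - C ((b + r) / 2)) * (X - C ((b - r) / 2)) := by
    have hb : C b = C ((b + r) / 2) + C ((b - r) / 2) := by rw [← map_add]; congr 1; ring
    have hc' : C c = -(C ((b + r) / 2) * C ((b - r) / 2)) := by
      rw [← map_mul, ← map_neg]; congr 1; linear_combination -hr / 4
    rw [hb, hc']
    ring
  rw [hfactor, roots_mul (mul_ne_zero (X_sub_C_ne_zero _) (X_sub_C_ne_zero _)), roots_X_sub_C,
    roots_X_sub_C]
  simp only [Multiset.singleton_add, Multiset.map_cons, Multiset.map_singleton, Multiset.sum_cons,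
    Multiset.sum_singleton]
  rw [abs_of_nonneg (by linarith [neg_abs_le b]), abs_of_nonpos (by linarith [le_abs_self b])]
  ring

namespace Matrix

variable {ι K : Type*} [Fintype ι] [DecidableEq ι] [Field K]

theorem det_diagonal_sub_of_one (d : ι → K) (hd : ∀ i, d i ≠ 0) :
    (diagonal d - of fun _ _ => (1 : K)).det = (∏ i, d i) * (1 - ∑ i, (d i)⁻¹) := by
  have hfactor : diagonal d - of (fun _ _ => (1 : K)) =
      diagonal d * (1 + vecMulVec (fun i => -(d i)⁻¹) (fun _ => 1)) := by
    ext i j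
    rw [diagonal_mul]
    by_cases h : i = j
    · subst h; simp [vecMulVec_apply, mul_add, hd, sub_eq_add_neg]
    · simp [vecMulVec_apply, h, hd]
  rw [hfactor, det_mul, det_diagonal, vecMulVec_eq Unit, det_one_add_replicateCol_mul_replicateRow]
  simp [dotProduct, sum_neg_distrib, sub_eq_add_neg]

variable (K) in
def completeCoveringMatrix (s : Finset ι) : Matrix ι ι K :=
  of fun i j => if i = j then (if i ∈ s then 1 else 0) else 1

theorem scalar_sub_completeCoveringMatrix (s : Finset ι) (x : K) :
    scalar ι x - completeCoveringMatrix K s =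
      diagonal (fun i => if i ∈ s then x else x + 1) - of fun _ _ => 1 := by
  ext i j
  by_cases h : i = j
  · subst h; by_cases hi : i ∈ s <;> simp [completeCoveringMatrix, hi]
  · simp [completeCoveringMatrix, h]

theorem eval_charpoly_completeCoveringMatrix (s : Finset ι) {x : K} (hx : x ≠ 0)
    (hx' : x + 1 ≠ 0) :
    (completeCoveringMatrix K s).charpoly.eval x =
      x ^ #s * (x + 1) ^ #sᶜ * (1 - #s / x - #sᶜ / (x + 1)) := by
  have hd : ∀ i, (if i ∈ s then x else x + 1) ≠ 0 := fun i => by split <;> assumption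
  rw [eval_charpoly, scalar_sub_completeCoveringMatrix, det_diagonal_sub_of_one _ hd]
  simp only [apply_ite Inv.inv]
  rw [prod_ite, sum_ite, prod_const, prod_const, sum_const, sum_const]
  simp only [filter_mem_eq_inter, univ_inter, filter_not, ← compl_eq_univ_sdiff, nsmul_eq_mul]
  ring

theorem charpoly_completeCoveringMatrix [Infinite K] {s : Finset ι} (hs : s.Nonempty)
    (hsc : sᶜ.Nonempty) :
    (completeCoveringMatrix K s).charpoly =
      X ^ (#s - 1) * (X + 1) ^ (#sᶜ - 1) *
        (X ^ 2 - C ((Fintype.card ι : K) - 1) * X - C (#s : K)) := by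
  obtain ⟨k, hk⟩ : ∃ k, #s = k + 1 := Nat.exists_eq_succ_of_ne_zero hs.card_pos.ne'
  obtain ⟨m, hm⟩ : ∃ m, #sᶜ = m + 1 := Nat.exists_eq_succ_of_ne_zero hsc.card_pos.ne'
  have hcard : (Fintype.card ι : K) = #s + #sᶜ := by
    rw [← card_add_card_compl s, Nat.cast_add]
  apply eq_of_infinite_eval_eq
  refine ((({0, -1} : Set K).toFinite.infinite_compl).mono fun x hx => ?_)
  have hx0 : x ≠ 0 := fun h => hx (by simp [h])
  have hx1 : x + 1 ≠ 0 := fun h => hx (by simp [eq_neg_of_add_eq_zero_left h])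
  rw [Set.mem_ofPred_eq, eval_charpoly_completeCoveringMatrix s hx0 hx1, hcard, hk, hm]
  simp only [eval_mul, eval_pow, eval_sub, eval_add, eval_X, eval_C, eval_one,
    add_tsub_cancel_right]
  field_simp
  push_cast
  ring

theorem sum_abs_roots_charpoly_completeCoveringMatrix {s : Finset ι} (hs : s.Nonempty)
    (hsc : sᶜ.Nonempty) :
    ((completeCoveringMatrix ℝ s).charpoly.roots.map abs).sum =
      (#sᶜ - 1 : ℕ) + √(((Fintype.card ι : ℝ) - 1) ^ 2 + 4 * #s) := by
  have hne := (charpoly_monic (completeCoveringMatrix ℝ s)).ne_zero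
  rw [charpoly_completeCoveringMatrix hs hsc] at hne ⊢
  rw [roots_mul hne, roots_mul (left_ne_zero_of_mul hne), roots_pow, roots_pow, roots_X,
    ← C_1, roots_X_add_C, Multiset.map_add, Multiset.sum_add,
    sum_abs_roots_X_sq_sub_C_mul_X_sub_C (by positivity)]
  simp [Multiset.map_nsmul, Multiset.sum_nsmul]

end Matrix

theorem covMatrix_eq_completeCoveringMatrix (n : ℕ) (hn : 2 ≤ n) :
    covMatrix n = completeCoveringMatrix ℝ (Iio ⟨n - 2, by omega⟩) := by
  ext i j
  simp [covMatrix, completeCoveringMatrix, Fin.lt_def]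

theorem stmt_8 (n : ℕ) (hn : 3 ≤ n) :
    ((covMatrix n).charpoly.roots.map (fun x => |x|)).sum
      = 1 + Real.sqrt ((n : ℝ) ^ 2 + 2 * n - 7) := by
  set s : Finset (Fin n) := Iio ⟨n - 2, by omega⟩
  have hs : #s = n - 2 := Fin.card_Iio _
  have hsc : #sᶜ = 2 := by rw [card_compl, hs, Fintype.card_fin]; omega
  have hs_ne : s.Nonempty := card_pos.1 (by omega)
  have hsc_ne : sᶜ.Nonempty := card_pos.1 (by omega)
  rw [covMatrix_eq_completeCoveringMatrix n (by omega),
    sum_abs_roots_charpoly_completeCoveringMatrix hs_ne hsc_ne,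
    hsc, hs, Fintype.card_fin, Nat.cast_sub (by omega : 2 ≤ n)]
  norm_num
  congr 1
  ring
end
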